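/- Let n ≥ 1, let D := { z ∈ ℂⁿ : 0 < ‖z‖ < 1 } be the punctured open unit ball, and let u : D → ℝ be u(z) = log(‖z‖²). Then u is maximal on D: for every open set U whose closure is compact and contained in D, and every C² function h : U → ℝ with Q(h)_z(v) ≥ 0 for all z ∈ U and v ∈ ℂⁿ, if limsup_{w→x, w∈U} h(w) ≤ u(x) for every x ∈ ∂U, then h(z) ≤ u(z) for all z ∈ U. (Thus log‖z‖² is the pluricomplex Green function of the unit ball with pole at the origin, for the standard complex structure.) -/

import Mathlib

open Filter Topology

/-- The Levi quadratic form for the standard complex structure of ℂⁿ: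
`Q(u)_z(v) := D²u_z(v,v) + D²u_z(iv,iv)`. -/
noncomputable def leviQ {n : ℕ} (u : EuclideanSpace ℂ (Fin n) → ℝ)
    (z v : EuclideanSpace ℂ (Fin n)) : ℝ :=
  fderiv ℝ (fderiv ℝ u) z v v
    + fderiv ℝ (fderiv ℝ u) z (Complex.I • v) (Complex.I • v)

section Aux

/-- 1D second derivative test at a local max. -/
private lemma sdt_aux {f : ℝ → ℝ} {c : ℝ}
    (hdiff : ∀ᶠ t in 𝓝 (0:ℝ), DifferentiableAt ℝ f t)
    (hmax : IsLocalMax f 0) (hd2 : HasDerivAt (deriv f) c 0) : c ≤ 0 := by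
  by_contra hc
  push_neg at hc
  have hd0 : deriv f 0 = 0 := hmax.deriv_eq_zero
  have hslope : Tendsto (slope (deriv f) 0) (𝓝[≠] (0:ℝ)) (𝓝 c) :=
    hasDerivAt_iff_tendsto_slope.1 hd2
  have hpos : ∀ᶠ t in 𝓝[>] (0:ℝ), 0 < deriv f t := by
    have h1 : ∀ᶠ t in 𝓝[>] (0:ℝ), 0 < slope (deriv f) 0 t :=
      (hslope.mono_left (nhdsWithin_mono _ (fun t (ht : (0:ℝ) < t) => ne_of_gt ht))).eventually
        (eventually_gt_nhds hc)
    filter_upwards [h1, self_mem_nhdsWithin] with t ht ht0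
    rw [slope_def_field, hd0, sub_zero, sub_zero] at ht
    have := mul_pos ht (ht0 : (0:ℝ) < t)
    rwa [div_mul_cancel₀] at this
    exact ne_of_gt ht0
  obtain ⟨δ₁, hδ₁, hP⟩ := (nhdsGT_basis (0:ℝ)).eventually_iff.1 hpos
  obtain ⟨δ₂, hδ₂, hD⟩ := (nhds_basis_Ioo_pos (0:ℝ)).eventually_iff.1 hdiff
  obtain ⟨δ₃, hδ₃, hM⟩ := (nhds_basis_Ioo_pos (0:ℝ)).eventually_iff.1 hmax
  set δ : ℝ := min δ₁ (min δ₂ δ₃) / 2 with hδdef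
  have hδpos : 0 < δ := by positivity
  have hb1 : δ < δ₁ := by
    have h := min_le_left δ₁ (min δ₂ δ₃); have h2 := lt_min hδ₂ hδ₃
    have := lt_min hδ₁ h2; simp only [hδdef]; linarith [min_le_left δ₁ (min δ₂ δ₃)]
  have hb2 : δ < δ₂ := by
    have h := (min_le_right δ₁ (min δ₂ δ₃)).trans (min_le_left δ₂ δ₃)
    simp only [hδdef]; linarith [lt_min hδ₁ (lt_min hδ₂ hδ₃)]
  have hb3 : δ < δ₃ := by
    have h := (min_le_right δ₁ (min δ₂ δ₃)).trans (min_le_right δ₂ δ₃)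
    simp only [hδdef]; linarith [lt_min hδ₁ (lt_min hδ₂ hδ₃)]
  have hmono : StrictMonoOn f (Set.Icc 0 δ) := by
    apply strictMonoOn_of_deriv_pos (convex_Icc _ _)
    · intro x hx
      exact (hD ⟨by linarith [hx.1], by linarith [hx.2]⟩).continuousAt.continuousWithinAt
    · intro x hx
      rw [interior_Icc] at hx
      exact hP ⟨hx.1, lt_trans hx.2 hb1⟩
  have h1 : f 0 < f δ := hmono ⟨le_refl _, le_of_lt hδpos⟩ ⟨le_of_lt hδpos, le_refl _⟩ hδpos
  have h2 : f δ ≤ f 0 := hM ⟨by linarith, by simpa using hb3⟩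
  linarith

variable {E : Type*} [NormedAddCommGroup E] [NormedSpace ℝ E]

/-- Along the line `t ↦ z + t • v`, a C² function's 1D derivative data. -/
private lemma line_aux {g : E → ℝ} {s : Set E} (hs : IsOpen s) (hg : ContDiffOn ℝ 2 g s)
    {z : E} (hz : z ∈ s) (v : E) :
    (∀ᶠ t in 𝓝 (0:ℝ), DifferentiableAt ℝ (fun t : ℝ => g (z + t • v)) t) ∧
    HasDerivAt (deriv (fun t : ℝ => g (z + t • v)))
      (fderiv ℝ (fderiv ℝ g) z v v) 0 := by
  set L : ℝ → E := fun t => z + t • v with hL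
  have hLd : ∀ t : ℝ, HasDerivAt L v t := by
    intro t
    exact ((hasDerivAt_const t z).add ((hasDerivAt_id t).smul_const v)).congr_deriv (by simp)
  have hLc : Continuous L := by fun_prop
  have hO : IsOpen (L ⁻¹' s) := hs.preimage hLc
  have h0O : (0:ℝ) ∈ L ⁻¹' s := by simp [hL, hz]
  have hgd : DifferentiableOn ℝ g s := hg.differentiableOn (by norm_num)
  have hgd' : DifferentiableOn ℝ (fderiv ℝ g) s :=
    (hg.fderiv_of_isOpen (m := 1) hs (by norm_num)).differentiableOn (by norm_num)
  have key : ∀ t ∈ L ⁻¹' s, HasDerivAt (fun t : ℝ => g (L t)) (fderiv ℝ g (L t) v) t := by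
    intro t ht
    exact ((hgd.differentiableAt (hs.mem_nhds ht)).hasFDerivAt).comp_hasDerivAt t (hLd t)
  have hev : ∀ᶠ t in 𝓝 (0:ℝ), t ∈ L ⁻¹' s := hO.mem_nhds h0O
  refine ⟨hev.mono fun t ht => (key t ht).differentiableAt, ?_⟩
  have heq : deriv (fun t : ℝ => g (L t)) =ᶠ[𝓝 (0:ℝ)] fun t => fderiv ℝ g (L t) v :=
    hev.mono fun t ht => (key t ht).deriv
  have h2 : HasDerivAt (fun t : ℝ => fderiv ℝ g (L t) v)
      (fderiv ℝ (fderiv ℝ g) z v v) 0 := by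
    have hdf : HasDerivAt (fun t : ℝ => fderiv ℝ g (L t)) (fderiv ℝ (fderiv ℝ g) z v) 0 := by
      have hfd := (hgd'.differentiableAt (hs.mem_nhds hz)).hasFDerivAt
      rw [show z = L 0 by simp [hL]] at hfd
      have := hfd.comp_hasDerivAt 0 (hLd 0)
      simpa [hL, Function.comp_def] using this
    have := ((ContinuousLinearMap.apply ℝ ℝ v).hasFDerivAt).comp_hasDerivAt 0 hdf
    simpa [Function.comp_def] using this
  exact h2.congr_of_eventuallyEq heq

private lemma comp1_aux {K : ℝ} (hK : 0 < K) :
    (∀ᶠ t in 𝓝 (0:ℝ), DifferentiableAt ℝ (fun t : ℝ => Real.log ((1+t)^2 * K)) t) ∧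
    HasDerivAt (deriv (fun t : ℝ => Real.log ((1+t)^2 * K))) (-2) 0 := by
  have hmem : ∀ᶠ t in 𝓝 (0:ℝ), (0:ℝ) < 1 + t := by
    have : Tendsto (fun t : ℝ => 1 + t) (𝓝 0) (𝓝 1) := by
      simpa [Pi.add_def] using (continuous_const.add continuous_id).tendsto (0:ℝ)
    exact this.eventually (eventually_gt_nhds one_pos)
  have key : ∀ t : ℝ, 0 < 1 + t →
      HasDerivAt (fun t : ℝ => Real.log ((1+t)^2 * K)) (2*(1+t)⁻¹) t := by
    intro t ht
    have hq : HasDerivAt (fun t : ℝ => (1+t)^2 * K) (2*(1+t)*K) t := by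
      have h1 : HasDerivAt (fun t : ℝ => (1+t)) 1 t := (hasDerivAt_id t).const_add 1
      have := (h1.pow 2).mul_const K
      simpa [mul_comm, mul_assoc, mul_left_comm] using this
    have hpos : (0:ℝ) < (1+t)^2 * K := by positivity
    have := (Real.hasDerivAt_log (ne_of_gt hpos)).comp t hq
    refine this.congr_deriv ?_
    field_simp
  have hev : deriv (fun t : ℝ => Real.log ((1+t)^2 * K)) =ᶠ[𝓝 (0:ℝ)]
      fun t => 2*(1+t)⁻¹ := hmem.mono fun t ht => (key t ht).deriv
  refine ⟨hmem.mono fun t ht => (key t ht).differentiableAt, ?_⟩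
  have h2 : HasDerivAt (fun t : ℝ => 2*(1+t)⁻¹) (-2) 0 := by
    have h1 : HasDerivAt (fun t : ℝ => (1+t)) 1 0 := (hasDerivAt_id 0).const_add 1
    have := (h1.inv (by norm_num)).const_mul 2
    refine this.congr_deriv ?_
    norm_num
  exact h2.congr_of_eventuallyEq hev

private lemma comp2_aux {K : ℝ} (hK : 0 < K) :
    (∀ᶠ t in 𝓝 (0:ℝ), DifferentiableAt ℝ (fun t : ℝ => Real.log ((1+t^2) * K)) t) ∧
    HasDerivAt (deriv (fun t : ℝ => Real.log ((1+t^2) * K))) 2 0 := by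
  have key : ∀ t : ℝ,
      HasDerivAt (fun t : ℝ => Real.log ((1+t^2) * K)) (2*t*(1+t^2)⁻¹) t := by
    intro t
    have hq : HasDerivAt (fun t : ℝ => (1+t^2) * K) (2*t*K) t := by
      have h1 : HasDerivAt (fun t : ℝ => 1+t^2) (2*t) t := by
        simpa using (hasDerivAt_pow 2 t).const_add 1
      simpa [mul_comm, mul_assoc, mul_left_comm] using h1.mul_const K
    have hpos : (0:ℝ) < (1+t^2) * K := by positivity
    have := (Real.hasDerivAt_log (ne_of_gt hpos)).comp t hq
    refine this.congr_deriv ?_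
    have h1 : (1:ℝ)+t^2 ≠ 0 := by positivity
    field_simp
  have hev : deriv (fun t : ℝ => Real.log ((1+t^2) * K)) =ᶠ[𝓝 (0:ℝ)]
      fun t => 2*t*(1+t^2)⁻¹ := Filter.Eventually.of_forall fun t => (key t).deriv
  refine ⟨Filter.Eventually.of_forall fun t => (key t).differentiableAt, ?_⟩
  have h2 : HasDerivAt (fun t : ℝ => 2*t*(1+t^2)⁻¹) 2 0 := by
    have hnum : HasDerivAt (fun t : ℝ => 2*t) 2 0 := by
      simpa using (hasDerivAt_id (0:ℝ)).const_mul 2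
    have hden : HasDerivAt (fun t : ℝ => 1+t^2) (2*0) 0 := by
      simpa using (hasDerivAt_pow 2 (0:ℝ)).const_add 1
    have := hnum.mul (hden.inv (by norm_num))
    refine this.congr_deriv ?_
    norm_num
  exact h2.congr_of_eventuallyEq hev

private lemma comp3_aux {K : ℝ} :
    (∀ᶠ t in 𝓝 (0:ℝ), DifferentiableAt ℝ (fun t : ℝ => (1+t)^2 * K) t) ∧
    HasDerivAt (deriv (fun t : ℝ => (1+t)^2 * K)) (2*K) 0 := by
  have key : ∀ t : ℝ, HasDerivAt (fun t : ℝ => (1+t)^2 * K) (2*(1+t)*K) t := by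
    intro t
    have h1 : HasDerivAt (fun t : ℝ => (1+t)) 1 t := (hasDerivAt_id t).const_add 1
    simpa [mul_comm, mul_assoc, mul_left_comm] using (h1.pow 2).mul_const K
  have hev : deriv (fun t : ℝ => (1+t)^2 * K) =ᶠ[𝓝 (0:ℝ)]
      fun t => 2*(1+t)*K := Filter.Eventually.of_forall fun t => (key t).deriv
  refine ⟨Filter.Eventually.of_forall fun t => (key t).differentiableAt, ?_⟩
  have h2 : HasDerivAt (fun t : ℝ => 2*(1+t)*K) (2*K) 0 := by
    have h1 : HasDerivAt (fun t : ℝ => (1+t)) 1 0 := (hasDerivAt_id 0).const_add 1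
    simpa [mul_comm, mul_assoc, mul_left_comm] using (h1.const_mul 2).mul_const K
  exact h2.congr_of_eventuallyEq hev

private lemma comp4_aux {K : ℝ} :
    (∀ᶠ t in 𝓝 (0:ℝ), DifferentiableAt ℝ (fun t : ℝ => (1+t^2) * K) t) ∧
    HasDerivAt (deriv (fun t : ℝ => (1+t^2) * K)) (2*K) 0 := by
  have key : ∀ t : ℝ, HasDerivAt (fun t : ℝ => (1+t^2) * K) (2*t*K) t := by
    intro t
    have h1 : HasDerivAt (fun t : ℝ => 1+t^2) (2*t) t := by
      simpa using (hasDerivAt_pow 2 t).const_add 1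
    simpa [mul_comm, mul_assoc, mul_left_comm] using h1.mul_const K
  have hev : deriv (fun t : ℝ => (1+t^2) * K) =ᶠ[𝓝 (0:ℝ)]
      fun t => 2*t*K := Filter.Eventually.of_forall fun t => (key t).deriv
  refine ⟨Filter.Eventually.of_forall fun t => (key t).differentiableAt, ?_⟩
  have h2 : HasDerivAt (fun t : ℝ => 2*t*K) (2*K) 0 := by
    simpa [mul_comm, mul_assoc, mul_left_comm] using
      ((hasDerivAt_id (0:ℝ)).const_mul 2).mul_const K
  exact h2.congr_of_eventuallyEq hev

/-- Combination rule for `f₁ - f₂ + ε * f₃`. -/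
private lemma combine_aux {f₁ f₂ f₃ : ℝ → ℝ} {c₁ c₂ c₃ ε : ℝ}
    (h₁ : (∀ᶠ t in 𝓝 (0:ℝ), DifferentiableAt ℝ f₁ t) ∧ HasDerivAt (deriv f₁) c₁ 0)
    (h₂ : (∀ᶠ t in 𝓝 (0:ℝ), DifferentiableAt ℝ f₂ t) ∧ HasDerivAt (deriv f₂) c₂ 0)
    (h₃ : (∀ᶠ t in 𝓝 (0:ℝ), DifferentiableAt ℝ f₃ t) ∧ HasDerivAt (deriv f₃) c₃ 0) :
    (∀ᶠ t in 𝓝 (0:ℝ), DifferentiableAt ℝ (fun t => f₁ t - f₂ t + ε * f₃ t) t) ∧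
    HasDerivAt (deriv (fun t => f₁ t - f₂ t + ε * f₃ t)) (c₁ - c₂ + ε * c₃) 0 := by
  refine ⟨?_, ?_⟩
  · filter_upwards [h₁.1, h₂.1, h₃.1] with t d₁ d₂ d₃
    exact (d₁.sub d₂).add (d₃.const_mul ε)
  · have hev : deriv (fun t => f₁ t - f₂ t + ε * f₃ t) =ᶠ[𝓝 (0:ℝ)]
        fun t => deriv f₁ t - deriv f₂ t + ε * deriv f₃ t := by
      filter_upwards [h₁.1, h₂.1, h₃.1] with t d₁ d₂ d₃
      rw [deriv_fun_add (d₁.fun_sub d₂) (d₃.const_mul ε), deriv_fun_sub d₁ d₂, deriv_const_mul ε d₃]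
    have h2 : HasDerivAt (fun t => deriv f₁ t - deriv f₂ t + ε * deriv f₃ t)
        (c₁ - c₂ + ε * c₃) 0 := (h₁.2.sub h₂.2).add (h₃.2.const_mul ε)
    exact h2.congr_of_eventuallyEq hev

end Aux

section Norms

variable {n : ℕ}

private lemma norm_line1_aux (z : EuclideanSpace ℂ (Fin n)) (t : ℝ) :
    ‖z + t • z‖^2 = (1+t)^2 * ‖z‖^2 := by
  have h1 : z + t • z = ((1:ℝ)+t) • z := by rw [add_smul, one_smul]
  rw [h1, norm_smul, mul_pow, Real.norm_eq_abs, sq_abs]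

private lemma norm_line2_aux (z : EuclideanSpace ℂ (Fin n)) (t : ℝ) :
    ‖z + t • (Complex.I • z)‖^2 = (1+t^2) * ‖z‖^2 := by
  have h1 : z + t • (Complex.I • z) = ((1:ℂ) + (t:ℂ) * Complex.I) • z := by
    rw [add_smul, one_smul, ← smul_smul, Complex.coe_smul]
  rw [h1, norm_smul, mul_pow]
  congr 1
  rw [Complex.sq_norm,
    show (1:ℂ) + (t:ℂ) * Complex.I = ((1:ℝ):ℂ) + (t:ℂ) * Complex.I by norm_num,
    Complex.normSq_add_mul_I]
  norm_num
end Norms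

/-- `log ‖z‖²` is maximal on the punctured unit ball of ℂⁿ: it dominates every
C² plurisubharmonic competitor on relatively compact subdomains whose boundary
values do not exceed it. -/
theorem stmt_3 {n : ℕ} (hn : 1 ≤ n) :
    ∀ U : Set (EuclideanSpace ℂ (Fin n)), IsOpen U →
      IsCompact (closure U) →
      closure U ⊆ {z : EuclideanSpace ℂ (Fin n) | 0 < ‖z‖ ∧ ‖z‖ < 1} →
      ∀ h : EuclideanSpace ℂ (Fin n) → ℝ, ContDiffOn ℝ 2 h U →
        (∀ z ∈ U, ∀ v, 0 ≤ leviQ h z v) →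
        (∀ x ∈ frontier U, limsup h (𝓝[U] x) ≤ Real.log (‖x‖ ^ 2)) →
        ∀ z ∈ U, h z ≤ Real.log (‖z‖ ^ 2) := by
  intro U hUo hUc hUsub h hC2 hLevi hbd z hz
  have hUsub' : ∀ w ∈ U, 0 < ‖w‖ ∧ ‖w‖ < 1 := fun w hw => hUsub (subset_closure hw)
  -- continuity of the comparison function on U
  have hu_contAt : ∀ w : EuclideanSpace ℂ (Fin n), 0 < ‖w‖ →
      ContinuousAt (fun w => Real.log (‖w‖^2)) w := by
    intro w hw
    exact (Real.continuousAt_log (by positivity)).comp ((continuous_norm.pow 2).continuousAt)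
  -- the key ε-claim
  have main : ∀ ε : ℝ, 0 < ε → ∀ w ∈ U, h w - Real.log (‖w‖^2) + ε*‖w‖^2 ≤ ε := by
    intro ε hε
    by_contra hcon
    push_neg at hcon
    obtain ⟨w₁, hw₁U, hw₁⟩ := hcon
    set g : EuclideanSpace ℂ (Fin n) → ℝ :=
      fun w => h w - Real.log (‖w‖^2) + ε*‖w‖^2 with hgdef
    set c : ℝ := g w₁ with hcdef
    have hc : ε < c := hw₁
    clear_value c
    have hg_cont : ContinuousOn g U := by
      apply ContinuousOn.add
      · exact hC2.continuousOn.sub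
          (fun w hw => ((hu_contAt w (hUsub' w hw).1).continuousWithinAt))
      · exact (continuous_const.mul (continuous_norm.pow 2)).continuousOn
    set S : Set (EuclideanSpace ℂ (Fin n)) := {w | w ∈ U ∧ c ≤ g w} with hSdef
    have hw₁S : w₁ ∈ S := ⟨hw₁U, hcdef.le⟩
    -- closure S ⊆ U
    have hclS : closure S ⊆ U := by
      intro x hx
      have hxclU : x ∈ closure U := closure_mono (fun w hw => hw.1) hx
      by_contra hxU
      have hxfr : x ∈ frontier U := by
        rw [frontier_eq_closure_inter_closure, hUo.isClosed_compl.closure_eq]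
        exact ⟨hxclU, hxU⟩
      have hneS : (𝓝[S] x).NeBot := mem_closure_iff_nhdsWithin_neBot.1 hx
      have hleSU : 𝓝[S] x ≤ 𝓝[U] x := nhdsWithin_mono x (fun w hw => hw.1)
      obtain ⟨hx1, hx2⟩ := hUsub hxclU
      have hlogneg : Real.log (‖x‖^2) < 0 :=
        Real.log_neg (by positivity) (by nlinarith)
      have hlim := hbd x hxfr
      have hbdd : IsBoundedUnder (· ≤ ·) (𝓝[U] x) h := by
        by_contra hb
        have hempty : {a : ℝ | ∀ᶠ w in 𝓝[U] x, h w ≤ a} = ∅ := by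
          ext a
          simp only [Set.mem_setOf_eq, Set.mem_empty_iff_false, iff_false]
          intro ha
          exact hb ⟨a, ha⟩
        have : limsup h (𝓝[U] x) = 0 := by
          rw [limsup_eq, hempty, Real.sInf_empty]
        rw [this] at hlim
        linarith
      set δ : ℝ := (c - ε)/2 with hδdef
      have hδpos : 0 < δ := by simp only [hδdef]; linarith
      have hev1 : ∀ᶠ w in 𝓝[U] x, h w < Real.log (‖x‖^2) + δ :=
        eventually_lt_of_limsup_lt (by linarith) hbdd
      have hev2 : ∀ᶠ w in 𝓝[U] x, Real.log (‖x‖^2) - δ < Real.log (‖w‖^2) := by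
        have := (hu_contAt x hx1).eventually
          (eventually_gt_nhds (by linarith : Real.log (‖x‖^2) - δ < Real.log (‖x‖^2)))
        exact this.filter_mono nhdsWithin_le_nhds
      have hfalse : ∀ᶠ w in 𝓝[S] x, False := by
        filter_upwards [hev1.filter_mono hleSU, hev2.filter_mono hleSU,
          eventually_mem_nhdsWithin] with w h1 h2 hwS
        have hw1 : ‖w‖ < 1 := (hUsub' w hwS.1).2
        have hsq : ‖w‖^2 < 1 := by nlinarith [norm_nonneg w]
        have hew : ε*‖w‖^2 ≤ ε := by nlinarith
        have hgw : c ≤ h w - Real.log (‖w‖^2) + ε*‖w‖^2 := hwS.2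
        have hc' : ε < c := hc
        simp only [hδdef] at h1 h2
        have key : ε < ε*‖w‖^2 := by linarith
        linarith
      exact hfalse.exists.elim (fun _ hf => hf)
    -- S is closed, hence compact
    have hS_closed : IsClosed S := by
      apply isClosed_of_closure_subset
      intro x hx
      have hxU : x ∈ U := hclS hx
      refine ⟨hxU, ?_⟩
      have hneS : (𝓝[S] x).NeBot := mem_closure_iff_nhdsWithin_neBot.1 hx
      have hcg : ContinuousAt g x := hg_cont.continuousAt (hUo.mem_nhds hxU)
      have htend : Tendsto g (𝓝[S] x) (𝓝 (g x)) := hcg.tendsto.mono_left nhdsWithin_le_nhds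
      exact ge_of_tendsto htend (eventually_mem_nhdsWithin.mono fun w hw => hw.2)
    have hS_cpt : IsCompact S :=
      hUc.of_isClosed_subset hS_closed (fun w hw => subset_closure hw.1)
    obtain ⟨zs, hzsS, hzmax⟩ :=
      hS_cpt.exists_isMaxOn ⟨w₁, hw₁S⟩ (hg_cont.mono (fun w hw => hw.1))
    have hzsU : zs ∈ U := hzsS.1
    -- zs is a local max of g
    have hlocmax : IsLocalMax g zs := by
      apply Filter.eventually_of_mem (hUo.mem_nhds hzsU)
      intro w hw
      by_cases hcw : c ≤ g w
      · exact hzmax ⟨hw, hcw⟩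
      · exact le_trans (le_of_not_ge hcw) hzsS.2
    set K : ℝ := ‖zs‖^2 with hKdef
    have hK : 0 < K := by
      have := (hUsub' zs hzsU).1
      positivity
    -- local max along the two lines
    have hline : ∀ v : EuclideanSpace ℂ (Fin n),
        IsLocalMax (fun t : ℝ => g (zs + t • v)) 0 := by
      intro v
      have hLt : Tendsto (fun t : ℝ => zs + t • v) (𝓝 0) (𝓝 zs) := by
        have hc : Continuous (fun t : ℝ => zs + t • v) := by fun_prop
        have := hc.tendsto 0
        simpa using this
      have := hLt.eventually hlocmax
      unfold IsLocalMax IsMaxFilter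
      simpa using this
    -- the two second-derivative inequalities
    have hineq1 : fderiv ℝ (fderiv ℝ h) zs zs zs - (-2) + ε * (2*K) ≤ 0 := by
      have hidU : (fun t : ℝ => g (zs + t • zs)) =
          fun t : ℝ => h (zs + t • zs) - Real.log ((1+t)^2*K) + ε*((1+t)^2*K) := by
        funext t
        simp only [hgdef, norm_line1_aux, hKdef]
      have hcomb := combine_aux (ε := ε) (line_aux hUo hC2 hzsU zs) (comp1_aux hK) (comp3_aux (K := K))
      have hmax := hline zs
      rw [hidU] at hmax
      exact sdt_aux hcomb.1 hmax hcomb.2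
    have hineq2 : fderiv ℝ (fderiv ℝ h) zs (Complex.I • zs) (Complex.I • zs)
        - 2 + ε * (2*K) ≤ 0 := by
      have hidU : (fun t : ℝ => g (zs + t • (Complex.I • zs))) =
          fun t : ℝ => h (zs + t • (Complex.I • zs))
            - Real.log ((1+t^2)*K) + ε*((1+t^2)*K) := by
        funext t
        simp only [hgdef, norm_line2_aux, hKdef]
      have hcomb := combine_aux (ε := ε) (line_aux hUo hC2 hzsU (Complex.I • zs))
        (comp2_aux hK) (comp4_aux (K := K))
      have hmax := hline (Complex.I • zs)
      rw [hidU] at hmax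
      exact sdt_aux hcomb.1 hmax hcomb.2
    have hlev := hLevi zs hzsU zs
    unfold leviQ at hlev
    nlinarith [hlev, hK, hε]
  -- conclude
  have hfin : ∀ ε : ℝ, 0 < ε → h z ≤ Real.log (‖z‖^2) + ε := by
    intro ε hε
    have := main ε hε z hz
    nlinarith [norm_nonneg z, sq_nonneg ‖z‖, mul_nonneg hε.le (sq_nonneg ‖z‖)]
  exact le_of_forall_pos_le_add hfin
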